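/- arXiv:0807.2069 — 2 statements merged into one kernel-verified Lean document; each statement's English description precedes it below -/
import Mathlib

section
/- Let H be an infinite-dimensional separable Hilbert space. The standard Gaussian cylinder set measure on H is not countably additive: there is no Borel probability measure μ on H such that for every finite-dimensional subspace V with orthogonal projection π_V and every Borel U ⊆ V, μ(π_V^{−1}(U)) equals the standard Gaussian measure of U in V. -/
/-!
If `μ` extended the Gaussian cylinder measure, then for every `n` the closed ball of radius `R`
would lie in the cylinder over the ball of radius `R` in an `n`-dimensional subspace, and this
cylinder has Gaussian measure at most `γ([-R, R])ⁿ`, where `γ` is the standard Gaussian on `ℝ`.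
Since `γ([-R, R]) < 1`, every ball is `μ`-null, which is absurd as the balls exhaust `H`.
-/

open MeasureTheory ProbabilityTheory Metric Set
open scoped NNReal

theorem gaussianReal_Icc_lt_one (m : ℝ) {v : ℝ≥0} (hv : v ≠ 0) (a b : ℝ) :
    gaussianReal m v (Icc a b) < 1 := by
  have hcompl : gaussianReal m v (Icc a b)ᶜ ≠ 0 := fun h => by
    have hIoi : gaussianReal m v (Ioi b) = 0 :=
      measure_mono_null (fun x (hx : b < x) (hx' : x ∈ Icc a b) => not_le.mpr hx hx'.2) h
    simpa [Real.volume_Ioi] using gaussianReal_absolutelyContinuous' m hv hIoi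
  exact prob_le_one.lt_of_ne fun h => hcompl ((prob_compl_eq_zero_iff measurableSet_Icc).mpr h)

theorem measure_pi_norm_toLp_le_le_pow {ι : Type*} [Fintype ι] (ν : Measure ℝ) [SigmaFinite ν]
    (R : ℝ) :
    Measure.pi (fun _ : ι => ν) {x | ‖WithLp.toLp 2 x‖ ≤ R} ≤ ν (Icc (-R) R) ^ Fintype.card ι := by
  calc Measure.pi (fun _ : ι => ν) {x | ‖WithLp.toLp 2 x‖ ≤ R}
      ≤ Measure.pi (fun _ : ι => ν) (univ.pi fun _ => Icc (-R) R) := by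
        refine measure_mono fun x hx i _ => abs_le.mp ?_
        exact (PiLp.norm_apply_le (WithLp.toLp 2 x) i).trans hx
    _ = ν (Icc (-R) R) ^ Fintype.card ι := by
        rw [Measure.pi_pi, Finset.prod_const, Finset.card_univ]

theorem exists_submodule_linearIsometryEquiv_euclideanSpace {𝕜 E : Type*} [RCLike 𝕜]
    [NormedAddCommGroup E] [InnerProductSpace 𝕜 E] (h : ¬ FiniteDimensional 𝕜 E) (n : ℕ) :
    ∃ (V : Submodule 𝕜 E) (_ : FiniteDimensional 𝕜 V),
      Nonempty (EuclideanSpace 𝕜 (Fin n) ≃ₗᵢ[𝕜] V) := by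
  have hrank : (n : Cardinal) ≤ Module.rank 𝕜 E :=
    Cardinal.natCast_lt_aleph0.le.trans (not_lt.mp (mt Module.rank_lt_aleph0_iff.mp h))
  obtain ⟨f, hf⟩ := exists_linearIndependent_of_le_rank hrank
  have : FiniteDimensional 𝕜 (Submodule.span 𝕜 (range f)) :=
    FiniteDimensional.span_of_finite 𝕜 (finite_range f)
  have hfinrank : Module.finrank 𝕜 (Submodule.span 𝕜 (range f)) = n := by
    rw [finrank_span_eq_card hf, Fintype.card_fin]
  exact ⟨_, inferInstance,
    ⟨((stdOrthonormalBasis 𝕜 (Submodule.span 𝕜 (range f))).reindex (finCongr hfinrank)).repr.symm⟩⟩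

theorem measure_closedBall_le_pow_of_map_pi_eq {H : Type*} [NormedAddCommGroup H]
    [InnerProductSpace ℝ H] [MeasurableSpace H] [BorelSpace H] {μ : Measure H} {n : ℕ}
    {V : Submodule ℝ H} [FiniteDimensional ℝ V] (e : EuclideanSpace ℝ (Fin n) ≃ₗᵢ[ℝ] V)
    (ν : Measure ℝ) [SigmaFinite ν]
    (hμ : ∀ U : Set V, MeasurableSet U →
      μ (V.orthogonalProjectionOnto ⁻¹' U)
        = Measure.map (fun x : Fin n → ℝ => e (WithLp.toLp 2 x)) (Measure.pi fun _ => ν) U)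
    (R : ℝ) :
    μ (closedBall 0 R) ≤ ν (Icc (-R) R) ^ n := by
  have hmeas : Measurable fun x : Fin n → ℝ => e (WithLp.toLp 2 x) :=
    e.continuous.measurable.comp (PiLp.continuous_toLp 2 _).measurable
  have hball : closedBall (0 : H) R ⊆ V.orthogonalProjectionOnto ⁻¹' closedBall 0 R := by
    intro x hx
    simp only [mem_preimage, mem_closedBall, dist_zero_right] at hx ⊢
    exact (V.norm_orthogonalProjectionOnto_apply_le x).trans hx
  calc μ (closedBall 0 R)
      ≤ μ (V.orthogonalProjectionOnto ⁻¹' closedBall 0 R) := measure_mono hball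
    _ = Measure.pi (fun _ : Fin n => ν) {x | ‖WithLp.toLp 2 x‖ ≤ R} := by
        rw [hμ _ measurableSet_closedBall, Measure.map_apply hmeas measurableSet_closedBall]
        simp only [preimage, mem_closedBall, dist_zero_right, LinearIsometryEquiv.norm_map]
    _ ≤ ν (Icc (-R) R) ^ n := by
        simpa using measure_pi_norm_toLp_le_le_pow (ι := Fin n) ν R

theorem stmt7_general (H : Type*) [NormedAddCommGroup H] [InnerProductSpace ℝ H]
    [MeasurableSpace H] [BorelSpace H]
    (h_infdim : ¬ FiniteDimensional ℝ H) :
    ¬ ∃ μ : Measure H, IsProbabilityMeasure μ ∧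
      ∀ (n : ℕ) (V : Submodule ℝ H) [FiniteDimensional ℝ V]
        (e : EuclideanSpace ℝ (Fin n) ≃ₗᵢ[ℝ] V) (U : Set V), MeasurableSet U →
          μ ((V.orthogonalProjectionOnto) ⁻¹' U)
            = Measure.map (fun x : Fin n → ℝ => e (WithLp.toLp 2 x))
                (Measure.pi fun _ : Fin n => gaussianReal 0 1) U := by
  rintro ⟨μ, hμ, hcyl⟩
  have hball_null (R : ℝ) : μ (closedBall 0 R) = 0 := by
    refine le_antisymm (ge_of_tendsto' (ENNReal.tendsto_pow_atTop_nhds_zero_of_lt_one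
      (gaussianReal_Icc_lt_one 0 one_ne_zero (-R) R)) fun n => ?_) zero_le
    obtain ⟨V, _, ⟨e⟩⟩ := exists_submodule_linearIsometryEquiv_euclideanSpace h_infdim n
    exact measure_closedBall_le_pow_of_map_pi_eq e _ (hcyl n V e) R
  have huniv : μ univ = 0 := by
    rw [← iUnion_closedBall_nat 0]
    exact measure_iUnion_null fun k => hball_null k
  simp at huniv

/-- On an infinite-dimensional separable real Hilbert space, the standard Gaussian cylinder set
measure is not countably additive: there is no Borel probability measure `μ` such that for every
finite-dimensional subspace `V` (identified with Euclidean space via a linear isometry `e`) and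
every Borel `U ⊆ V`, `μ(π_V⁻¹(U))` is the standard Gaussian measure of `U`. -/
theorem stmt7 (H : Type*) [NormedAddCommGroup H] [InnerProductSpace ℝ H] [CompleteSpace H]
    [SecondCountableTopology H] [MeasurableSpace H] [BorelSpace H]
    (h_infdim : ¬ FiniteDimensional ℝ H) :
    ¬ ∃ μ : Measure H, IsProbabilityMeasure μ ∧
      ∀ (n : ℕ) (V : Submodule ℝ H) [FiniteDimensional ℝ V]
        (e : EuclideanSpace ℝ (Fin n) ≃ₗᵢ[ℝ] V) (U : Set V), MeasurableSet U →
          μ ((V.orthogonalProjectionOnto) ⁻¹' U)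
            = Measure.map (fun x : Fin n → ℝ => e (WithLp.toLp 2 x))
                (Measure.pi fun _ : Fin n => gaussianReal 0 1) U :=
  stmt7_general H h_infdim
end

section
/- Let H be a separable Hilbert space and A a positive injective trace-class (or Hilbert–Schmidt) operator on H. Then the norm ‖x‖_A = ‖Ax‖_H is a measurable norm on H in the sense of Gross: for every ε > 0 there is a finite-dimensional subspace V_ε ⊆ H such that for every finite-dimensional subspace W orthogonal to V_ε, the standard Gaussian measure on W of {x ∈ W : ‖Ax‖ > ε} is less than ε. -/
/-! Choose a finite set `s` of eigen-indices whose tail `∑_{i ∉ s} Λᵢ²` is below `ε³`, and let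
`V` be the span of the corresponding eigenvectors. For `W ⟂ V` with its standard Gaussian `γ_W`,
Parseval's identity and `⟪bᵢ, A x⟫ = Λᵢ ⟪bᵢ, x⟫` give `∫ ‖A x‖² dγ_W = ∑ᵢ Λᵢ² ∫ ⟪bᵢ, x⟫² dγ_W`.
Each `∫ ⟪bᵢ, x⟫² dγ_W` is the variance of a linear functional of norm `≤ ‖bᵢ‖ = 1`, and it
vanishes for `i ∈ s` because `bᵢ ⟂ W`. Hence `∫ ‖A x‖² dγ_W < ε³`, and Chebyshev's inequality
gives `γ_W {‖A x‖ > ε} < ε`. -/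

open MeasureTheory ProbabilityTheory
open scoped RealInnerProductSpace ENNReal

section HilbertBasis

variable {ι H : Type*} [NormedAddCommGroup H] [InnerProductSpace ℝ H]

theorem HilbertBasis.enorm_sq_eq_tsum (b : HilbertBasis ι ℝ H) (y : H) :
    ‖y‖ₑ ^ 2 = ∑' i, ‖⟪b i, y⟫‖ₑ ^ 2 := by
  have h := b.hasSum_inner_mul_inner y y
  simp_rw [← real_inner_comm y, ← sq, real_inner_self_eq_norm_sq] at h
  simp_rw [← ofReal_norm, ← ENNReal.ofReal_pow (norm_nonneg _), Real.norm_eq_abs, sq_abs]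
  rw [← h.tsum_eq, ENNReal.ofReal_tsum_of_nonneg (fun _ => sq_nonneg _) h.summable]

theorem HilbertBasis.inner_apply_eq_mul (b : HilbertBasis ι ℝ H) {A : H →L[ℝ] H} {Λ : ι → ℝ}
    (heig : ∀ i, A (b i) = Λ i • b i) (i : ι) (y : H) :
    ⟪b i, A y⟫ = Λ i * ⟪b i, y⟫ := by
  classical
  suffices (innerSL ℝ (b i)).comp A = Λ i • innerSL ℝ (b i) from congr($this y)
  refine ContinuousLinearMap.ext_on
    (Submodule.dense_iff_topologicalClosure_eq_top.2 b.dense_span) ?_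
  rintro _ ⟨j, rfl⟩
  by_cases hij : i = j
  · simp [hij, heig]
  · simp [heig, orthonormal_iff_ite.1 b.orthonormal, hij]

end HilbertBasis

theorem measure_lt_norm_le_lintegral_enorm_sq_div {α F : Type*} [MeasurableSpace α]
    [NormedAddCommGroup F] {μ : Measure α} {f : α → F} (hf : AEStronglyMeasurable f μ) {ε : ℝ}
    (hε : 0 < ε) :
    μ {x | ε < ‖f x‖} ≤ (∫⁻ x, ‖f x‖ₑ ^ 2 ∂μ) / ENNReal.ofReal ε ^ 2 := by
  refine (measure_mono fun x (hx : ε < ‖f x‖) => ?_).trans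
    (meas_ge_le_lintegral_div (hf.enorm.pow_const 2) (by simpa using hε) (by finiteness))
  change ENNReal.ofReal ε ^ 2 ≤ ‖f x‖ₑ ^ 2
  rw [← ofReal_norm]
  gcongr

theorem lintegral_enorm_sq_dual_stdGaussian {E : Type*} [NormedAddCommGroup E]
    [InnerProductSpace ℝ E] [FiniteDimensional ℝ E] [MeasurableSpace E] [BorelSpace E]
    (L : StrongDual ℝ E) :
    ∫⁻ x, ‖L x‖ₑ ^ 2 ∂stdGaussian E = ‖L‖ₑ ^ 2 := by
  have h := ofReal_variance (IsGaussian.memLp_dual (stdGaussian E) L 2 (by simp))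
  rw [variance_dual_stdGaussian, evariance, integral_strongDual_stdGaussian] at h
  simpa [← ofReal_norm, ENNReal.ofReal_pow] using h.symm

theorem map_pi_gaussianReal_eq_stdGaussian {ι F : Type*} [Fintype ι] [NormedAddCommGroup F]
    [InnerProductSpace ℝ F] [MeasurableSpace F] [BorelSpace F]
    (e : EuclideanSpace ℝ ι ≃ₗᵢ[ℝ] F) :
    haveI := e.finiteDimensional
    (Measure.pi fun _ : ι => gaussianReal 0 1).map (fun x => e (WithLp.toLp 2 x)) =
      stdGaussian F := by
  rw [← stdGaussian_map e, ← map_pi_eq_stdGaussian, Measure.map_map (by fun_prop) (by fun_prop)]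
  rfl

section Subspace

variable {ι H : Type*} [NormedAddCommGroup H] [InnerProductSpace ℝ H] [MeasurableSpace H]
  [BorelSpace H]

theorem lintegral_enorm_inner_sq_stdGaussian_le (K : Submodule ℝ H) [FiniteDimensional ℝ K]
    (v : H) :
    ∫⁻ x : K, ‖⟪v, (x : H)⟫‖ₑ ^ 2 ∂stdGaussian K ≤ ‖v‖ₑ ^ 2 := by
  refine (lintegral_enorm_sq_dual_stdGaussian ((innerSL ℝ v).comp K.subtypeL)).trans_le ?_
  gcongr 1
  refine enorm_le_iff_norm_le.2 ((ContinuousLinearMap.opNorm_comp_le _ _).trans ?_)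
  rw [innerSL_apply_norm]
  exact mul_le_of_le_one_right (norm_nonneg v) (Submodule.norm_subtypeL_le K)

theorem lintegral_enorm_sq_stdGaussian_le_tsum_indicator [Countable ι]
    (b : HilbertBasis ι ℝ H) {A : H →L[ℝ] H} {Λ : ι → ℝ} (heig : ∀ i, A (b i) = Λ i • b i)
    {s : Set ι} (W : Submodule ℝ H) [FiniteDimensional ℝ W]
    (hW : W ≤ (Submodule.span ℝ (b '' s))ᗮ) :
    ∫⁻ x : W, ‖A x‖ₑ ^ 2 ∂stdGaussian W ≤ ∑' i, sᶜ.indicator (fun i => ‖Λ i‖ₑ ^ 2) i := by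
  have hcoord (i : ι) : ∫⁻ x : W, ‖⟪b i, A x⟫‖ₑ ^ 2 ∂stdGaussian W ≤
      sᶜ.indicator (fun i => ‖Λ i‖ₑ ^ 2) i := by
    simp_rw [b.inner_apply_eq_mul heig, enorm_mul, mul_pow]
    rw [lintegral_const_mul' _ _ (by finiteness)]
    by_cases hi : i ∈ s
    · have h0 (x : W) : ⟪b i, (x : H)⟫ = 0 := Submodule.inner_right_of_mem_orthogonal
        (Submodule.subset_span (Set.mem_image_of_mem b hi)) (hW x.2)
      simp [h0]
    · rw [Set.indicator_of_mem hi]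
      calc _ ≤ ‖Λ i‖ₑ ^ 2 * ‖b i‖ₑ ^ 2 := by
            gcongr
            exact lintegral_enorm_inner_sq_stdGaussian_le W (b i)
        _ = ‖Λ i‖ₑ ^ 2 := by simp [← ofReal_norm, b.orthonormal.1 i]
  simp_rw [b.enorm_sq_eq_tsum]
  rw [lintegral_tsum fun i => by fun_prop]
  exact ENNReal.tsum_le_tsum hcoord

end Subspace

theorem stmt8_general (H : Type*) [NormedAddCommGroup H] [InnerProductSpace ℝ H]
    [MeasurableSpace H] [BorelSpace H]
    (A : H →L[ℝ] H) (b : HilbertBasis ℕ ℝ H) (Λ : ℕ → ℝ)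
    (heig : ∀ i, A (b i) = Λ i • b i)
    (hHS : Summable fun i => Λ i ^ 2) :
    ∀ ε : ℝ, 0 < ε → ∃ V : Submodule ℝ H, FiniteDimensional ℝ V ∧
      ∀ (W : Submodule ℝ H), FiniteDimensional ℝ W → W ≤ Vᗮ →
        ∀ (n : ℕ) (e : EuclideanSpace ℝ (Fin n) ≃ₗᵢ[ℝ] W),
          Measure.map (fun x : Fin n → ℝ => e (WithLp.toLp 2 x))
              (Measure.pi fun _ : Fin n => gaussianReal 0 1)
            {x : W | ε < ‖A (x : H)‖} < ENNReal.ofReal ε := by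
  intro ε hε
  have hfin : ∑' i, ‖Λ i‖ₑ ^ 2 ≠ ∞ := by
    simp_rw [← enorm_pow]
    exact tsum_enorm_ne_top_iff_summable_norm.2 hHS.norm
  obtain ⟨s, hs⟩ := ((ENNReal.tendsto_tsum_compl_atTop_zero hfin).eventually
    (gt_mem_nhds (ENNReal.pow_pos (ENNReal.ofReal_pos.2 hε) 3))).exists
  refine ⟨Submodule.span ℝ (b '' s), FiniteDimensional.span_of_finite ℝ (s.finite_toSet.image b),
    fun W _ hW n e => ?_⟩
  have htail : ∫⁻ x : W, ‖A x‖ₑ ^ 2 ∂stdGaussian W < ENNReal.ofReal ε * ENNReal.ofReal ε ^ 2 :=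
    calc _ ≤ ∑' i, (s : Set ℕ)ᶜ.indicator (fun i => ‖Λ i‖ₑ ^ 2) i :=
          lintegral_enorm_sq_stdGaussian_le_tsum_indicator b heig W hW
      _ = ∑' i : {i // i ∉ s}, ‖Λ i‖ₑ ^ 2 := (tsum_subtype _ _).symm
      _ < ENNReal.ofReal ε ^ 3 := hs
      _ = ENNReal.ofReal ε * ENNReal.ofReal ε ^ 2 := by ring
  rw [map_pi_gaussianReal_eq_stdGaussian e]
  exact (measure_lt_norm_le_lintegral_enorm_sq_div (by fun_prop) hε).trans_lt
    (ENNReal.div_lt_of_lt_mul htail)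

/-- Gross measurability of `‖x‖_A = ‖Ax‖` for a positive injective Hilbert–Schmidt operator `A`
on a separable Hilbert space `H` (given here by an orthonormal eigenbasis `b` with positive,
square-summable eigenvalues `Λ`): for every `ε > 0` there is a finite-dimensional subspace
`V_ε ⊆ H` such that for every finite-dimensional `W ⟂ V_ε` the standard Gaussian measure on `W`
of `{x ∈ W : ‖Ax‖ > ε}` is less than `ε`. -/
theorem stmt8 (H : Type*) [NormedAddCommGroup H] [InnerProductSpace ℝ H] [CompleteSpace H]
    [SecondCountableTopology H] [MeasurableSpace H] [BorelSpace H]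
    (A : H →L[ℝ] H) (b : HilbertBasis ℕ ℝ H) (Λ : ℕ → ℝ)
    (hpos : ∀ i, 0 < Λ i) (heig : ∀ i, A (b i) = Λ i • b i)
    (hHS : Summable fun i => Λ i ^ 2) :
    ∀ ε : ℝ, 0 < ε → ∃ V : Submodule ℝ H, FiniteDimensional ℝ V ∧
      ∀ (W : Submodule ℝ H), FiniteDimensional ℝ W → W ≤ Vᗮ →
        ∀ (n : ℕ) (e : EuclideanSpace ℝ (Fin n) ≃ₗᵢ[ℝ] W),
          Measure.map (fun x : Fin n → ℝ => e (WithLp.toLp 2 x))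
              (Measure.pi fun _ : Fin n => gaussianReal 0 1)
            {x : W | ε < ‖A (x : H)‖} < ENNReal.ofReal ε :=
  stmt8_general H A b Λ heig hHS
end
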